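/- Let G be a snake graph with d tiles and let Ω be as in the context. Then for every perfect matching P of G and every sequence of tile indices i_1, …, i_r (r ≥ 0) such that, setting Q_0 = P and Q_t = μ_{i_t} Q_{t−1}, each Q_{t−1} can twist on G_{i_t}, and Q_r = P, one has Σ_{t=1}^{r} Ω(i_t, Q_{t−1}) = 0. -/

import Mathlib

/-- An edge of the integer lattice: `(p, true)` is the horizontal unit segment
from `p` to `p + (1, 0)`, and `(p, false)` is the vertical unit segment from
`p` to `p + (0, 1)`. -/
abbrev LatticeEdge : Type := (ℤ × ℤ) × Bool

/-- A lattice edge is horizontal if it is parallel to the x-axis. -/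
def IsHorizontalEdge (e : LatticeEdge) : Prop := e.2 = true

/-- A lattice edge is vertical if it is parallel to the y-axis. -/
def IsVerticalEdge (e : LatticeEdge) : Prop := e.2 = false

/-- The two endpoints of a lattice edge. -/
def endpointsOf (e : LatticeEdge) : Set (ℤ × ℤ) :=
  if e.2 then {e.1, (e.1.1 + 1, e.1.2)} else {e.1, (e.1.1, e.1.2 + 1)}

/-- The south side of the unit tile with lower-left corner `c`. -/
def southSide (c : ℤ × ℤ) : LatticeEdge := (c, true)

/-- The north side of the unit tile with lower-left corner `c`. -/
def northSide (c : ℤ × ℤ) : LatticeEdge := ((c.1, c.2 + 1), true)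

/-- The west side of the unit tile with lower-left corner `c`. -/
def westSide (c : ℤ × ℤ) : LatticeEdge := (c, false)

/-- The east side of the unit tile with lower-left corner `c`. -/
def eastSide (c : ℤ × ℤ) : LatticeEdge := ((c.1 + 1, c.2), false)

/-- The four sides of the unit tile with lower-left corner `c`. -/
def tileSides (c : ℤ × ℤ) : Set LatticeEdge :=
  {southSide c, northSide c, westSide c, eastSide c}

/-- The four corners of the unit tile with lower-left corner `c`. -/
def tileCorners (c : ℤ × ℤ) : Set (ℤ × ℤ) :=
  {c, (c.1 + 1, c.2), (c.1, c.2 + 1), (c.1 + 1, c.2 + 1)}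

/-- A snake graph with `d ≥ 1` tiles: tile `1` has lower-left corner `(0, 0)`,
and each subsequent tile is the translate of the previous one by one unit to
the right or one unit up.  Tiles are indexed `1, …, d`; `corner i` is the
lower-left corner of tile `i`. -/
structure SnakeGraph where
  d : ℕ
  one_le_d : 1 ≤ d
  corner : ℕ → ℤ × ℤ
  corner_one : corner 1 = (0, 0)
  corner_succ : ∀ i, 1 ≤ i → i < d →
    corner (i + 1) = ((corner i).1 + 1, (corner i).2) ∨
      corner (i + 1) = ((corner i).1, (corner i).2 + 1)

namespace SnakeGraph

/-- The set of sides of tile `i` of `G`. -/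
def tile (G : SnakeGraph) (i : ℕ) : Set LatticeEdge := tileSides (G.corner i)

/-- The edge set of (the graph of) `G`: all sides of all tiles. -/
def edges (G : SnakeGraph) : Set LatticeEdge := ⋃ i ∈ Set.Icc 1 G.d, G.tile i

/-- The vertex set of `G`: all corners of all tiles. -/
def vertices (G : SnakeGraph) : Set (ℤ × ℤ) :=
  ⋃ i ∈ Set.Icc 1 G.d, tileCorners (G.corner i)

/-- A perfect matching of `G`: a set of edges of `G` such that every vertex of
`G` is incident to exactly one edge of the set. -/
def IsPerfectMatching (G : SnakeGraph) (P : Set LatticeEdge) : Prop :=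
  P ⊆ G.edges ∧ ∀ v ∈ G.vertices, ∃! e, e ∈ P ∧ v ∈ endpointsOf e

/-- `P` can twist on tile `i` if two of the four sides of tile `i` belong to `P`. -/
def CanTwist (G : SnakeGraph) (P : Set LatticeEdge) (i : ℕ) : Prop :=
  1 ≤ i ∧ i ≤ G.d ∧ (P ∩ G.tile i).ncard = 2

/-- The twist of `P` on tile `i`: replace the sides of tile `i` belonging to
`P` by the other sides of tile `i`. -/
def twist (G : SnakeGraph) (i : ℕ) (P : Set LatticeEdge) : Set LatticeEdge :=
  (P \ G.tile i) ∪ (G.tile i \ P)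

/-- A boundary edge of `G`: an edge which is a side of exactly one tile. -/
def IsBoundaryEdge (G : SnakeGraph) (e : LatticeEdge) : Prop :=
  ∃! i, (1 ≤ i ∧ i ≤ G.d) ∧ e ∈ G.tile i

/-- `P` is the minimal matching `P₋` of `G`: the perfect matching consisting
only of boundary edges which contains no vertical side of tile `1`. -/
def IsMinimalMatching (G : SnakeGraph) (P : Set LatticeEdge) : Prop :=
  G.IsPerfectMatching P ∧ (∀ e ∈ P, G.IsBoundaryEdge e) ∧
    ∀ e ∈ P ∩ G.tile 1, IsHorizontalEdge e

/-- `P` is the maximal matching `P₊` of `G`: the perfect matching consisting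
only of boundary edges other than the minimal one, i.e. the one containing a
vertical side of tile `1`. -/
def IsMaximalMatching (G : SnakeGraph) (P : Set LatticeEdge) : Prop :=
  G.IsPerfectMatching P ∧ (∀ e ∈ P, G.IsBoundaryEdge e) ∧
    ∃ e ∈ P ∩ G.tile 1, IsVerticalEdge e

/-- `G` is a straight snake graph: every tile is the translate of the previous
one by one unit to the right. -/
def IsStraight (G : SnakeGraph) : Prop :=
  ∀ i, 1 ≤ i → i < G.d → G.corner (i + 1) = ((G.corner i).1 + 1, (G.corner i).2)

end SnakeGraph

/-!
Let the height of a matching be `∑ e ∈ M, w e`, where only horizontal edges carry weight and the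
weights are chosen so that the two horizontal sides of every tile weigh `±1` in a checkerboard
pattern. Twisting a tile then changes the height by `±1`, and two adjacent tiles that can both
twist do so in opposite directions. Rotate a closed twist walk so that its second matching has
maximal height. If the twists entering and leaving this peak are on the same tile, they cancel
by (a). Otherwise the two tiles both lower the peak, so they are not adjacent, and (b) lets us swap
the two twists, which replaces the peak by a matching of height two lower. In both cases the sum of `Ω`
is unchanged while the total height of the walk plus its length drops, so induction applies.
-/

open scoped symmDiff

lemma List.map_range_succ {α : Type*} (f : ℕ → α) (r : ℕ) :
    (List.range (r + 1)).map f = f 0 :: (List.range r).map (f ∘ Nat.succ) := by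
  simp [List.range_succ_eq_map]

section Walks

variable {ι σ : Type*} (step : ι → σ → σ)

def walkEnd (s : σ) (L : List ι) : σ := L.foldl (fun s i => step i s) s

def IsWalk (can : σ → ι → Prop) : σ → List ι → Prop
  | _, [] => True
  | s, i :: L => can s i ∧ IsWalk can (step i s) L

def walkSum {β : Type*} [AddCommMonoid β] (f : ι → σ → β) : σ → List ι → β
  | _, [] => 0
  | s, i :: L => f i s + walkSum f (step i s) L

variable {step} {can : σ → ι → Prop} {β : Type*} [AddCommMonoid β] (f : ι → σ → β)

@[simp] lemma walkEnd_nil (s : σ) : walkEnd step s [] = s := rfl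

@[simp] lemma walkEnd_cons (s : σ) (i : ι) (L : List ι) :
    walkEnd step s (i :: L) = walkEnd step (step i s) L := rfl

lemma walkEnd_append (s : σ) (A B : List ι) :
    walkEnd step s (A ++ B) = walkEnd step (walkEnd step s A) B :=
  List.foldl_append

@[simp] lemma isWalk_nil (s : σ) : IsWalk step can s [] := trivial

@[simp] lemma isWalk_cons (s : σ) (i : ι) (L : List ι) :
    IsWalk step can s (i :: L) ↔ can s i ∧ IsWalk step can (step i s) L := Iff.rfl

@[simp] lemma walkSum_nil (s : σ) : walkSum step f s [] = 0 := rfl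

@[simp] lemma walkSum_cons (s : σ) (i : ι) (L : List ι) :
    walkSum step f s (i :: L) = f i s + walkSum step f (step i s) L := rfl

lemma isWalk_append (s : σ) (A B : List ι) :
    IsWalk step can s (A ++ B) ↔ IsWalk step can s A ∧ IsWalk step can (walkEnd step s A) B := by
  induction A generalizing s with
  | nil => simp
  | cons i A ih => simp [ih, and_assoc]

lemma walkSum_append (s : σ) (A B : List ι) :
    walkSum step f s (A ++ B) = walkSum step f s A + walkSum step f (walkEnd step s A) B := by
  induction A generalizing s with
  | nil => simp
  | cons i A ih => simp [ih, add_assoc]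

lemma IsWalk.walkEnd_mem {p : Set σ} (hp : ∀ s i, s ∈ p → can s i → step i s ∈ p)
    {s : σ} {L : List ι} (hL : IsWalk step can s L) (hs : s ∈ p) : walkEnd step s L ∈ p := by
  induction L generalizing s with
  | nil => exact hs
  | cons i L ih => exact ih hL.2 (hp s i hs hL.1)

section Rotation

variable {s : σ} {A B : List ι}

lemma walkEnd_append_comm (hcl : walkEnd step s (A ++ B) = s) :
    walkEnd step (walkEnd step s A) (B ++ A) = walkEnd step s A := by
  rw [walkEnd_append, ← walkEnd_append s A B, hcl]

lemma IsWalk.append_comm (hcl : walkEnd step s (A ++ B) = s) (h : IsWalk step can s (A ++ B)) :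
    IsWalk step can (walkEnd step s A) (B ++ A) := by
  rw [isWalk_append] at h ⊢
  exact ⟨h.2, by rw [← walkEnd_append, hcl]; exact h.1⟩

lemma walkSum_append_comm (hcl : walkEnd step s (A ++ B) = s) :
    walkSum step f (walkEnd step s A) (B ++ A) = walkSum step f s (A ++ B) := by
  rw [walkSum_append, walkSum_append, ← walkEnd_append, hcl, add_comm]

lemma exists_prefix_walkEnd_eq_of_prefix_append_comm (hcl : walkEnd step s (A ++ B) = s)
    {D : List ι} (hD : D <+: B ++ A) :
    ∃ D', D' <+: A ++ B ∧ walkEnd step (walkEnd step s A) D = walkEnd step s D' := by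
  rcases List.prefix_or_prefix_of_prefix hD (List.prefix_append B A) with hDB | ⟨t, rfl⟩
  · exact ⟨A ++ D, (List.prefix_append_right_inj A).2 hDB, (walkEnd_append ..).symm⟩
  · refine ⟨t, ((List.prefix_append_right_inj B).1 hD).trans (List.prefix_append A B), ?_⟩
    rw [walkEnd_append, ← walkEnd_append s A B, hcl]

end Rotation

lemma exists_rotation_peak {α : Type*} [LinearOrder α] (h : σ → α) {s : σ} {L : List ι}
    (hcl : walkEnd step s L = s) (hne : L ≠ []) :
    ∃ A b B, L = A ++ b :: B ∧ ∀ D, D <+: b :: (B ++ A) →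
      h (walkEnd step (walkEnd step s A) D) ≤ h (step b (walkEnd step s A)) := by
  classical
  obtain ⟨A₀, hA₀L, hmax⟩ := L.inits.toFinset.exists_max_image (fun D => h (walkEnd step s D))
    ⟨[], by simp⟩
  simp only [List.mem_toFinset, List.mem_inits] at hA₀L hmax
  -- The empty prefix and `L` itself both lead to `s`, so the highest prefix may be taken nonempty.
  obtain ⟨A₁, hA₁L, hA₁, hmax⟩ : ∃ A₁, A₁ <+: L ∧ A₁ ≠ [] ∧
      ∀ D, D <+: L → h (walkEnd step s D) ≤ h (walkEnd step s A₁) := by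
    rcases eq_or_ne A₀ [] with rfl | hA₀
    · exact ⟨L, List.prefix_refl L, hne, by simpa [hcl] using hmax⟩
    · exact ⟨A₀, hA₀L, hA₀, hmax⟩
  obtain ⟨A, b, rfl⟩ := (List.eq_nil_or_concat' A₁).resolve_left hA₁
  obtain ⟨B, rfl⟩ := hA₁L
  refine ⟨A, b, B, by simp, fun D hD => ?_⟩
  have hcl' : walkEnd step s (A ++ ([b] ++ B)) = s := by simpa using hcl
  obtain ⟨D', hD', hD'eq⟩ :=
    exists_prefix_walkEnd_eq_of_prefix_append_comm hcl' (D := D) (by simpa using hD)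
  rw [hD'eq]
  simpa [walkEnd_append] using hmax D' (by simpa using hD')

section Sequences

variable {idx : ℕ → ι} {R : ℕ → σ}

lemma walkEnd_map_range {r : ℕ} (hR : ∀ t < r, R (t + 1) = step (idx t) (R t)) :
    walkEnd step (R 0) ((List.range r).map idx) = R r := by
  induction r generalizing idx R with
  | zero => rfl
  | succ r ih =>
    rw [List.map_range_succ, walkEnd_cons, ← hR 0 r.succ_pos]
    exact ih (R := R ∘ Nat.succ) fun t ht => hR (t + 1) (by omega)

lemma isWalk_map_range {r : ℕ} (hR : ∀ t < r, R (t + 1) = step (idx t) (R t))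
    (hcan : ∀ t < r, can (R t) (idx t)) : IsWalk step can (R 0) ((List.range r).map idx) := by
  induction r generalizing idx R with
  | zero => trivial
  | succ r ih =>
    rw [List.map_range_succ, isWalk_cons, ← hR 0 r.succ_pos]
    exact ⟨hcan 0 r.succ_pos, ih (R := R ∘ Nat.succ) (fun t ht => hR (t + 1) (by omega))
      fun t ht => hcan (t + 1) (by omega)⟩

lemma walkSum_map_range {r : ℕ} (hR : ∀ t < r, R (t + 1) = step (idx t) (R t)) :
    walkSum step f (R 0) ((List.range r).map idx) = ∑ t ∈ Finset.range r, f (idx t) (R t) := by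
  induction r generalizing idx R with
  | zero => rfl
  | succ r ih =>
    rw [List.map_range_succ, walkSum_cons, ← hR 0 r.succ_pos, Finset.sum_range_succ', add_comm]
    exact congrArg (· + _) (ih (R := R ∘ Nat.succ) fun t ht => hR (t + 1) (by omega))

end Sequences

end Walks

lemma mem_iff_of_inter_eq {α : Type*} {M T H : Set α} (h : M ∩ T = H) {e : α} (he : e ∈ T) :
    e ∈ M ↔ e ∈ H := by
  rw [← h]
  simp [he]

lemma union_diff_eq_of_inter_eq {α : Type*} {M H V : Set α} (hHV : Disjoint H V)
    (h : M ∩ (H ∪ V) = H) : (H ∪ V) \ M = V := by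
  ext e
  have := Set.ext_iff.1 h e
  have : e ∈ H → e ∉ V := fun he => Set.disjoint_left.1 hHV he
  simp only [Set.mem_inter_iff, Set.mem_union, Set.mem_sdiff] at *
  tauto

lemma symmDiff_inter_self_right {α : Type*} (M T : Set α) : (M ∆ T) ∩ T = T \ M := by
  ext e
  simp only [Set.mem_inter_iff, Set.mem_symmDiff, Set.mem_sdiff]
  tauto

theorem existsUnique_mem_symmDiff {E V : Type*} (ends : E → Set V) {S K : Set V} {M T : Set E}
    (hM : ∀ v ∈ S, ∃! e, e ∈ M ∧ v ∈ ends e) (hin : ∀ v ∈ K, ∃ e ∈ M ∩ T, v ∈ ends e)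
    (hout : ∀ v ∈ K, ∃! e, e ∈ T \ M ∧ v ∈ ends e) (hT : ∀ e ∈ T, ends e ⊆ K)
    {v : V} (hv : v ∈ S) : ∃! e, e ∈ M ∆ T ∧ v ∈ ends e := by
  by_cases hvK : v ∈ K
  · obtain ⟨e, ⟨heT, hve⟩, huniq⟩ := hout v hvK
    obtain ⟨f, ⟨hfM, hfT⟩, hvf⟩ := hin v hvK
    refine ⟨e, ⟨Or.inr heT, hve⟩, ?_⟩
    rintro e' ⟨he' | he', hve'⟩
    · exact absurd ((hM v hv).unique ⟨he'.1, hve'⟩ ⟨hfM, hvf⟩ ▸ hfT) he'.2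
    · exact huniq e' ⟨he', hve'⟩
  · obtain ⟨e, ⟨heM, hve⟩, huniq⟩ := hM v hv
    have hnot : ∀ e, v ∈ ends e → e ∉ T := fun e hve heT => hvK (hT e heT hve)
    refine ⟨e, ⟨Or.inl ⟨heM, hnot e hve⟩, hve⟩, ?_⟩
    rintro e' ⟨he' | he', hve'⟩
    · exact huniq e' ⟨he'.1, hve'⟩
    · exact absurd he'.1 (hnot e' hve')

def horizontalSides (c : ℤ × ℤ) : Set LatticeEdge := {southSide c, northSide c}

def verticalSides (c : ℤ × ℤ) : Set LatticeEdge := {westSide c, eastSide c}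

lemma tileSides_eq_union (c : ℤ × ℤ) : tileSides c = horizontalSides c ∪ verticalSides c := by
  ext e
  simp only [tileSides, horizontalSides, verticalSides, Set.mem_insert_iff, Set.mem_singleton_iff,
    Set.mem_union]
  tauto

lemma endpointsOf_subset_tileCorners {c : ℤ × ℤ} {e : LatticeEdge} (he : e ∈ tileSides c) :
    endpointsOf e ⊆ tileCorners c := by
  simp only [tileSides, Set.mem_insert_iff, Set.mem_singleton_iff] at he
  rcases he with rfl | rfl | rfl | rfl <;>
    simp [endpointsOf, southSide, northSide, westSide, eastSide, tileCorners, Set.insert_subset_iff]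

lemma existsUnique_horizontalSides {c v : ℤ × ℤ} (hv : v ∈ tileCorners c) :
    ∃! e, e ∈ horizontalSides c ∧ v ∈ endpointsOf e := by
  obtain ⟨x, y⟩ := c
  simp only [tileCorners, Set.mem_insert_iff, Set.mem_singleton_iff] at hv
  rcases hv with rfl | rfl | rfl | rfl <;> apply existsUnique_of_exists_of_unique <;>
    simp [horizontalSides, endpointsOf, southSide, northSide] <;> omega

lemma existsUnique_verticalSides {c v : ℤ × ℤ} (hv : v ∈ tileCorners c) :
    ∃! e, e ∈ verticalSides c ∧ v ∈ endpointsOf e := by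
  obtain ⟨x, y⟩ := c
  simp only [tileCorners, Set.mem_insert_iff, Set.mem_singleton_iff] at hv
  rcases hv with rfl | rfl | rfl | rfl <;> apply existsUnique_of_exists_of_unique <;>
    simp [verticalSides, endpointsOf, westSide, eastSide] <;> omega

lemma pair_eq_of_disjoint_endpointsOf {c : ℤ × ℤ} {a b : LatticeEdge} (ha : a ∈ tileSides c)
    (hb : b ∈ tileSides c) (hab : a ≠ b) (hdisj : Disjoint (endpointsOf a) (endpointsOf b)) :
    ({a, b} : Set LatticeEdge) = horizontalSides c ∨ {a, b} = verticalSides c := by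
  obtain ⟨x, y⟩ := c
  simp only [tileSides, Set.mem_insert_iff, Set.mem_singleton_iff] at ha hb
  rcases ha with rfl | rfl | rfl | rfl <;> rcases hb with rfl | rfl | rfl | rfl <;>
    simp_all [horizontalSides, verticalSides, endpointsOf, southSide, northSide, westSide,
      eastSide, Set.pair_comm]

def edgeWeight (e : LatticeEdge) : ℤ :=
  if e.2 then -((e.1.1 + e.1.2).negOnePow : ℤ) * e.1.2 else 0

def tileSign (c : ℤ × ℤ) : ℤ := (c.1 + c.2).negOnePow

lemma tileSign_eq_one_or (c : ℤ × ℤ) : tileSign c = 1 ∨ tileSign c = -1 := by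
  rcases Int.units_eq_one_or (c.1 + c.2).negOnePow with h | h <;> simp [tileSign, h]

lemma edgeWeight_southSide_add_edgeWeight_northSide (c : ℤ × ℤ) :
    edgeWeight (southSide c) + edgeWeight (northSide c) = tileSign c := by
  simp only [edgeWeight, southSide, northSide, tileSign, ← add_assoc, Int.negOnePow_succ, if_true]
  push_cast
  ring

lemma edgeWeight_of_mem_verticalSides {c : ℤ × ℤ} {e : LatticeEdge} (he : e ∈ verticalSides c) :
    edgeWeight e = 0 := by
  rcases he with rfl | rfl <;> rfl

namespace SnakeGraph

section Geometry

variable (G : SnakeGraph)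

lemma twist_eq_symmDiff (i : ℕ) (M : Set LatticeEdge) : G.twist i M = M ∆ G.tile i := rfl

lemma twist_twist (i : ℕ) (M : Set LatticeEdge) : G.twist i (G.twist i M) = M :=
  symmDiff_symmDiff_cancel_right _ _

lemma twist_comm (i j : ℕ) (M : Set LatticeEdge) :
    G.twist i (G.twist j M) = G.twist j (G.twist i M) :=
  symmDiff_right_comm _ _ _

lemma corner_fst_add_corner_snd {i : ℕ} (hi : 1 ≤ i) (hid : i ≤ G.d) :
    (G.corner i).1 + (G.corner i).2 = i - 1 := by
  induction i, hi using Nat.le_induction with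
  | base => simp [G.corner_one]
  | succ n hn ih =>
    rcases G.corner_succ n hn (by omega) with h | h <;> rw [h] <;> push_cast <;>
      linarith [ih (by omega)]

lemma tileSign_corner_succ {i : ℕ} (hi : 1 ≤ i) (hid : i < G.d) :
    tileSign (G.corner (i + 1)) = -tileSign (G.corner i) := by
  rcases G.corner_succ i hi hid with h | h <;>
    simp [h, tileSign, add_right_comm _ (1 : ℤ), ← add_assoc, Int.negOnePow_succ]

lemma disjoint_tile_of_one_lt_natAbs {i j : ℕ} (hi : 1 ≤ i) (hid : i ≤ G.d) (hj : 1 ≤ j)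
    (hjd : j ≤ G.d) (hij : 1 < ((i : ℤ) - j).natAbs) : Disjoint (G.tile i) (G.tile j) := by
  have diagonal : ∀ k, 1 ≤ k → k ≤ G.d → ∀ e ∈ G.tile k,
      e.1.1 + e.1.2 = k - 1 ∨ e.1.1 + e.1.2 = k := by
    intro k hk hkd e he
    have := G.corner_fst_add_corner_snd hk hkd
    simp only [tile, tileSides, Set.mem_insert_iff, Set.mem_singleton_iff] at he
    rcases he with rfl | rfl | rfl | rfl <;> simp [southSide, northSide, westSide, eastSide] <;>
      omega
  refine Set.disjoint_left.2 fun e hei hej => ?_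
  have := diagonal i hi hid e hei
  have := diagonal j hj hjd e hej
  omega

lemma tile_subset_edges {i : ℕ} (hi : 1 ≤ i) (hid : i ≤ G.d) : G.tile i ⊆ G.edges :=
  Set.subset_biUnion_of_mem (u := G.tile) (Set.mem_Icc.2 ⟨hi, hid⟩)

lemma tileCorners_subset_vertices {i : ℕ} (hi : 1 ≤ i) (hid : i ≤ G.d) :
    tileCorners (G.corner i) ⊆ G.vertices :=
  Set.subset_biUnion_of_mem (u := fun i => tileCorners (G.corner i)) (Set.mem_Icc.2 ⟨hi, hid⟩)

variable {G} {M : Set LatticeEdge} {i j : ℕ}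

lemma inter_tile_twist_of_disjoint (hij : Disjoint (G.tile i) (G.tile j)) :
    G.twist i M ∩ G.tile j = M ∩ G.tile j := by
  ext e
  have : e ∈ G.tile j → e ∉ G.tile i := fun he => Set.disjoint_right.1 hij he
  simp only [twist_eq_symmDiff, Set.mem_inter_iff, Set.mem_symmDiff]
  tauto

lemma canTwist_twist_iff_of_disjoint (hij : Disjoint (G.tile i) (G.tile j)) :
    G.CanTwist (G.twist i M) j ↔ G.CanTwist M j := by
  rw [CanTwist, CanTwist, inter_tile_twist_of_disjoint hij]

end Geometry

section Matchings

variable {G : SnakeGraph} {M : Set LatticeEdge} {i : ℕ}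

lemma IsPerfectMatching.inter_tile_eq (hM : G.IsPerfectMatching M) (h : G.CanTwist M i) :
    M ∩ G.tile i = horizontalSides (G.corner i) ∨ M ∩ G.tile i = verticalSides (G.corner i) := by
  obtain ⟨hi, hid, hcard⟩ := h
  obtain ⟨a, b, hab, hMT⟩ := Set.ncard_eq_two.1 hcard
  have hmem : ∀ e ∈ ({a, b} : Set LatticeEdge), e ∈ M ∧ e ∈ G.tile i := fun e he => by
    rwa [← hMT] at he
  obtain ⟨haM, haT⟩ := hmem a (by simp)
  obtain ⟨hbM, hbT⟩ := hmem b (by simp)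
  rw [hMT]
  refine pair_eq_of_disjoint_endpointsOf haT hbT hab (Set.disjoint_left.2 fun v hva hvb => hab ?_)
  have hv := G.tileCorners_subset_vertices hi hid (endpointsOf_subset_tileCorners haT hva)
  exact (hM.2 v hv).unique ⟨haM, hva⟩ ⟨hbM, hvb⟩

lemma IsPerfectMatching.inter_tile_eq_and_tile_diff_eq (hM : G.IsPerfectMatching M)
    (h : G.CanTwist M i) :
    (M ∩ G.tile i = horizontalSides (G.corner i) ∧ G.tile i \ M = verticalSides (G.corner i)) ∨
      (M ∩ G.tile i = verticalSides (G.corner i) ∧ G.tile i \ M = horizontalSides (G.corner i)) := by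
  have hdisj : Disjoint (horizontalSides (G.corner i)) (verticalSides (G.corner i)) := by
    simp [horizontalSides, verticalSides, southSide, northSide, westSide, eastSide]
  have hT : G.tile i = horizontalSides (G.corner i) ∪ verticalSides (G.corner i) :=
    tileSides_eq_union _
  rcases hM.inter_tile_eq h with hMT | hMT
  · exact Or.inl ⟨hMT, by rw [hT] at hMT ⊢; exact union_diff_eq_of_inter_eq hdisj hMT⟩
  · refine Or.inr ⟨hMT, ?_⟩
    rw [hT, Set.union_comm] at hMT ⊢
    exact union_diff_eq_of_inter_eq hdisj.symm hMT

lemma IsPerfectMatching.southSide_mem_iff (hM : G.IsPerfectMatching M) (h : G.CanTwist M i) :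
    (southSide (G.corner i) ∈ M ↔ northSide (G.corner i) ∈ M) ∧
      (southSide (G.corner i) ∈ M ↔ westSide (G.corner i) ∉ M) ∧
      (southSide (G.corner i) ∈ M ↔ eastSide (G.corner i) ∉ M) := by
  have hside : ∀ H, M ∩ G.tile i = H → ∀ e ∈ tileSides (G.corner i), (e ∈ M ↔ e ∈ H) :=
    fun H hH e he => mem_iff_of_inter_eq hH he
  rcases hM.inter_tile_eq h with hMT | hMT <;>
  · rw [hside _ hMT (southSide _) (by simp [tileSides]),
      hside _ hMT (northSide _) (by simp [tileSides]),
      hside _ hMT (westSide _) (by simp [tileSides]), hside _ hMT (eastSide _) (by simp [tileSides])]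
    simp [horizontalSides, verticalSides, southSide, northSide, westSide, eastSide]

lemma IsPerfectMatching.twist (hM : G.IsPerfectMatching M) (h : G.CanTwist M i) :
    G.IsPerfectMatching (G.twist i M) := by
  have hsides := hM.inter_tile_eq_and_tile_diff_eq h
  obtain ⟨hi, hid, -⟩ := h
  refine ⟨?_, fun v hv => existsUnique_mem_symmDiff endpointsOf hM.2 (K := tileCorners (G.corner i))
    (T := G.tile i) ?_ ?_ (fun e he => endpointsOf_subset_tileCorners he) hv⟩
  · rintro e (⟨he, -⟩ | ⟨he, -⟩)
    exacts [hM.1 he, G.tile_subset_edges hi hid he]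
  · rcases hsides with ⟨hMT, -⟩ | ⟨hMT, -⟩ <;> rw [hMT] <;> intro w hw
    exacts [(existsUnique_horizontalSides hw).exists, (existsUnique_verticalSides hw).exists]
  · rcases hsides with ⟨-, hTM⟩ | ⟨-, hTM⟩ <;> rw [hTM] <;> intro w hw
    exacts [existsUnique_verticalSides hw, existsUnique_horizontalSides hw]

lemma IsPerfectMatching.canTwist_twist (hM : G.IsPerfectMatching M) (h : G.CanTwist M i) :
    G.CanTwist (G.twist i M) i := by
  refine ⟨h.1, h.2.1, ?_⟩
  rw [twist_eq_symmDiff, symmDiff_inter_self_right]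
  rcases hM.inter_tile_eq_and_tile_diff_eq h with ⟨-, hTM⟩ | ⟨-, hTM⟩ <;> rw [hTM] <;>
    exact Set.ncard_pair (by simp [southSide, northSide, westSide, eastSide, Prod.ext_iff])

end Matchings

section Height

variable (G : SnakeGraph)

lemma edges_finite : G.edges.Finite :=
  (Set.finite_Icc 1 G.d).biUnion fun _ _ => by simp [tile, tileSides]

noncomputable def height (M : Set LatticeEdge) : ℤ :=
  ∑ e ∈ G.edges_finite.toFinset, M.indicator edgeWeight e

noncomputable def heightBound : ℤ := ∑ e ∈ G.edges_finite.toFinset, |edgeWeight e|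

noncomputable def level (M : Set LatticeEdge) : ℕ := (G.height M + G.heightBound).toNat

open scoped Classical in
noncomputable def twistSign (i : ℕ) (M : Set LatticeEdge) : ℤ :=
  if southSide (G.corner i) ∈ M then -tileSign (G.corner i) else tileSign (G.corner i)

lemma abs_height_le (M : Set LatticeEdge) : |G.height M| ≤ G.heightBound :=
  (Finset.abs_sum_le_sum_abs _ _).trans <| Finset.sum_le_sum fun e _ => by
    by_cases he : e ∈ M <;> simp [Set.indicator, he]

lemma natCast_level (M : Set LatticeEdge) : (G.level M : ℤ) = G.height M + G.heightBound :=
  Int.toNat_of_nonneg (by linarith [(abs_le.1 (G.abs_height_le M)).1])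

lemma height_symmDiff (M T : Set LatticeEdge) :
    G.height (M ∆ T) = G.height M - ∑ e ∈ G.edges_finite.toFinset, (M ∩ T).indicator edgeWeight e +
      ∑ e ∈ G.edges_finite.toFinset, (T \ M).indicator edgeWeight e := by
  simp only [height, ← Finset.sum_sub_distrib, ← Finset.sum_add_distrib]
  refine Finset.sum_congr rfl fun e _ => ?_
  by_cases heM : e ∈ M <;> by_cases heT : e ∈ T <;>
    simp [Set.indicator, Set.mem_symmDiff, heM, heT]

lemma sum_indicator_horizontalSides {i : ℕ} (hi : 1 ≤ i) (hid : i ≤ G.d) :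
    ∑ e ∈ G.edges_finite.toFinset, (horizontalSides (G.corner i)).indicator edgeWeight e =
      tileSign (G.corner i) := by
  have hsub : ({southSide (G.corner i), northSide (G.corner i)} : Finset LatticeEdge) ⊆
      G.edges_finite.toFinset := by
    intro e he
    rw [Set.Finite.mem_toFinset]
    refine G.tile_subset_edges hi hid ?_
    simp only [Finset.mem_insert, Finset.mem_singleton] at he
    rcases he with rfl | rfl <;> simp [tile, tileSides]
  rw [horizontalSides, ← Finset.coe_pair, Finset.sum_indicator_subset _ hsub,
    Finset.sum_pair (by simp [southSide, northSide, Prod.ext_iff]),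
    edgeWeight_southSide_add_edgeWeight_northSide]

lemma sum_indicator_verticalSides (c : ℤ × ℤ) :
    ∑ e ∈ G.edges_finite.toFinset, (verticalSides c).indicator edgeWeight e = 0 :=
  Finset.sum_eq_zero fun _ _ => Set.indicator_apply_eq_zero.2 edgeWeight_of_mem_verticalSides

lemma twistSign_eq_one_or (i : ℕ) (M : Set LatticeEdge) :
    G.twistSign i M = 1 ∨ G.twistSign i M = -1 := by
  unfold twistSign
  rcases tileSign_eq_one_or (G.corner i) with h | h <;> split_ifs <;> simp [h]

lemma twistSign_twist (i : ℕ) (M : Set LatticeEdge) :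
    G.twistSign i (G.twist i M) = -G.twistSign i M := by
  have hS : southSide (G.corner i) ∈ G.tile i := by simp [tile, tileSides]
  by_cases hSM : southSide (G.corner i) ∈ M <;>
    simp [twistSign, twist_eq_symmDiff, Set.mem_symmDiff, hS, hSM]

variable {G} {M : Set LatticeEdge} {i j : ℕ}

lemma twistSign_twist_of_disjoint (hij : Disjoint (G.tile i) (G.tile j)) :
    G.twistSign j (G.twist i M) = G.twistSign j M := by
  classical
  have hS : southSide (G.corner j) ∉ G.tile i :=
    Set.disjoint_right.1 hij (by simp [tile, tileSides])
  have hSM : southSide (G.corner j) ∈ G.twist i M ↔ southSide (G.corner j) ∈ M := by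
    simp [twist, hS]
  exact if_congr hSM rfl rfl

lemma IsPerfectMatching.height_twist (hM : G.IsPerfectMatching M) (h : G.CanTwist M i) :
    G.height (G.twist i M) = G.height M + G.twistSign i M := by
  have hS : southSide (G.corner i) ∈ G.tile i := by simp [tile, tileSides]
  rw [twist_eq_symmDiff, height_symmDiff, twistSign]
  rcases hM.inter_tile_eq_and_tile_diff_eq h with ⟨hMT, hTM⟩ | ⟨hMT, hTM⟩
  · have hSM : southSide (G.corner i) ∈ M :=
      (mem_iff_of_inter_eq hMT hS).2 (by simp [horizontalSides])
    rw [hMT, hTM, sum_indicator_horizontalSides G h.1 h.2.1, sum_indicator_verticalSides,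
      if_pos hSM]
    ring
  · have hSM : southSide (G.corner i) ∉ M := fun hSM => by
      simpa [verticalSides, southSide, westSide, eastSide] using (mem_iff_of_inter_eq hMT hS).1 hSM
    rw [hMT, hTM, sum_indicator_horizontalSides G h.1 h.2.1, sum_indicator_verticalSides,
      if_neg hSM]
    ring

lemma IsPerfectMatching.level_twist (hM : G.IsPerfectMatching M) (h : G.CanTwist M i) :
    (G.level (G.twist i M) : ℤ) = G.level M + G.twistSign i M := by
  rw [natCast_level, natCast_level, hM.height_twist h]
  ring

lemma IsPerfectMatching.twist_ne (hM : G.IsPerfectMatching M) (h : G.CanTwist M i) :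
    G.twist i M ≠ M := fun heq => by
  have := hM.level_twist h
  rw [heq] at this
  rcases G.twistSign_eq_one_or i M with h' | h' <;> omega

lemma IsPerfectMatching.twistSign_succ (hM : G.IsPerfectMatching M) (h : G.CanTwist M i)
    (h' : G.CanTwist M (i + 1)) : G.twistSign (i + 1) M = -G.twistSign i M := by
  have hsides := hM.southSide_mem_iff h
  have hsides' := hM.southSide_mem_iff h'
  have hid : i < G.d := by have := h'.2.1; omega
  -- The two tiles share the east side of tile `i` or its north side.
  have hS : southSide (G.corner (i + 1)) ∈ M ↔ southSide (G.corner i) ∈ M := by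
    rcases G.corner_succ i h.1 hid with hc | hc
    · rw [hsides'.2.1, hsides.2.2, hc]
      rfl
    · rw [hsides.1, hc]
      rfl
  unfold twistSign
  rw [G.tileSign_corner_succ h.1 hid]
  by_cases hSM : southSide (G.corner i) ∈ M
  · rw [if_pos (hS.2 hSM), if_pos hSM]
  · rw [if_neg (mt hS.1 hSM), if_neg hSM]

lemma IsPerfectMatching.one_lt_natAbs_of_twistSign_eq (hM : G.IsPerfectMatching M)
    (hi : G.CanTwist M i) (hj : G.CanTwist M j) (hij : i ≠ j)
    (hsign : G.twistSign i M = G.twistSign j M) : 1 < ((i : ℤ) - j).natAbs := by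
  by_contra hnear
  have := G.twistSign_eq_one_or i M
  rcases (by omega : j = i + 1 ∨ i = j + 1) with rfl | rfl
  · have := hM.twistSign_succ hi hj
    omega
  · have := hM.twistSign_succ hj hi
    omega

end Height

section Cycles

variable {G : SnakeGraph} (Ω : ℕ → Set LatticeEdge → ℤ)

/-- The two twists through a peak either cancel, or are on non-adjacent tiles (both lower the
peak) and can be swapped to pass through a matching two levels lower. -/
lemma exists_reduction_at_peak
    (hΩa : ∀ i P, G.IsPerfectMatching P → G.CanTwist P i → Ω i (G.twist i P) = -Ω i P)
    (hΩb : ∀ i j P, G.IsPerfectMatching P → G.CanTwist P i → G.CanTwist P j →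
      1 < ((i : ℤ) - (j : ℤ)).natAbs → Ω i P + Ω j (G.twist i P) = Ω j P + Ω i (G.twist j P))
    {X : Set LatticeEdge} {a b : ℕ} {C : List ℕ} (hX : G.IsPerfectMatching X)
    (hL : IsWalk G.twist G.CanTwist X (b :: a :: C))
    (hup : G.level X ≤ G.level (G.twist b X))
    (hdown : G.level (G.twist a (G.twist b X)) ≤ G.level (G.twist b X)) :
    ∃ L, IsWalk G.twist G.CanTwist X L ∧ walkEnd G.twist X L = walkEnd G.twist X (b :: a :: C) ∧
      walkSum G.twist (fun _ M => G.level M + 1) X L <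
        walkSum G.twist (fun _ M => G.level M + 1) X (b :: a :: C) ∧
      walkSum G.twist Ω X L = walkSum G.twist Ω X (b :: a :: C) := by
  obtain ⟨hb, ha, hC⟩ := hL
  have hY := hX.twist hb
  have hsign_b : G.twistSign b X = 1 := by
    have := hX.level_twist hb
    rcases G.twistSign_eq_one_or b X with h | h <;> omega
  have hsign_a : G.twistSign a (G.twist b X) = -1 := by
    have := hY.level_twist ha
    rcases G.twistSign_eq_one_or a (G.twist b X) with h | h <;> omega
  rcases eq_or_ne a b with rfl | hab
  · refine ⟨C, ?_, ?_, ?_, ?_⟩ <;> simp only [walkEnd_cons, walkSum_cons, G.twist_twist] at hC ⊢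
    · exact hC
    · omega
    · rw [hΩa a X hX hb]
      ring
  · have hfar : 1 < ((b : ℤ) - a).natAbs := hY.one_lt_natAbs_of_twistSign_eq
      (hX.canTwist_twist hb) ha hab.symm (by rw [G.twistSign_twist, hsign_b, hsign_a])
    have hdisj := G.disjoint_tile_of_one_lt_natAbs hb.1 hb.2.1 ha.1 ha.2.1 hfar
    have haX : G.CanTwist X a := (canTwist_twist_iff_of_disjoint hdisj).1 ha
    have hsign_a' : G.twistSign a X = -1 := by rw [← twistSign_twist_of_disjoint hdisj, hsign_a]
    have hcomm := G.twist_comm b a X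
    refine ⟨a :: b :: C, ⟨haX, (canTwist_twist_iff_of_disjoint hdisj.symm).2 hb, hcomm ▸ hC⟩,
      by simp [hcomm], ?_, ?_⟩ <;> simp only [walkSum_cons, hcomm]
    · have := hX.level_twist hb
      have := hX.level_twist haX
      omega
    · linarith [hΩb b a X hX hb haX hfar]

theorem walkSum_eq_zero_of_walkEnd_eq
    (hΩa : ∀ i P, G.IsPerfectMatching P → G.CanTwist P i → Ω i (G.twist i P) = -Ω i P)
    (hΩb : ∀ i j P, G.IsPerfectMatching P → G.CanTwist P i → G.CanTwist P j →
      1 < ((i : ℤ) - (j : ℤ)).natAbs → Ω i P + Ω j (G.twist i P) = Ω j P + Ω i (G.twist j P))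
    {P : Set LatticeEdge} {L : List ℕ} (hP : G.IsPerfectMatching P)
    (hL : IsWalk G.twist G.CanTwist P L) (hcl : walkEnd G.twist P L = P) :
    walkSum G.twist Ω P L = 0 := by
  induction hn : walkSum G.twist (fun _ M => G.level M + 1) P L using Nat.strong_induction_on
    generalizing P L with
  | _ n ih =>
  rcases eq_or_ne L [] with rfl | hne
  · rfl
  obtain ⟨A, b, B, rfl, hpeak⟩ := exists_rotation_peak G.level hcl hne
  have hX : G.IsPerfectMatching (walkEnd G.twist P A) :=
    ((isWalk_append _ _ _).1 hL).1.walkEnd_mem (p := {M | G.IsPerfectMatching M})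
      (fun _ _ hM h => IsPerfectMatching.twist hM h) hP
  have hL' := hL.append_comm hcl
  have hcl' := walkEnd_append_comm hcl
  rw [← walkSum_append_comm _ hcl] at hn ⊢
  obtain ⟨a, C, hBA⟩ : ∃ a C, B ++ A = a :: C := by
    refine List.exists_cons_of_ne_nil fun hnil => hX.twist_ne hL'.1 ?_
    simpa [hnil] using hcl'
  simp only [List.cons_append, hBA] at hL' hcl' hn hpeak ⊢
  obtain ⟨L', hL'', hcl'', hlt, hsum⟩ := exists_reduction_at_peak Ω hΩa hΩb hX hL'
    (hpeak [] List.nil_prefix) (hpeak [b, a] (by simp))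
  rw [← hsum]
  exact ih _ (hn ▸ hlt) hX hL'' (hcl''.trans hcl') rfl

end Cycles

end SnakeGraph

/-- Let `Ω` assign an integer to every pair of a tile index and a perfect
matching of the snake graph `G` that can twist on that tile, satisfying
`Ω i (μ_i P) = -Ω i P` and the commutation relation
`Ω i P + Ω j (μ_i P) = Ω j P + Ω i (μ_j P)` for `|i - j| > 1`.  Then along any
closed sequence of twists starting and ending at a perfect matching `P`, the
sum of the values of `Ω` vanishes. -/
theorem omega_sum_along_cycle_eq_zero
    (G : SnakeGraph) (Ω : ℕ → Set LatticeEdge → ℤ)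
    (hΩa : ∀ i P, G.IsPerfectMatching P → G.CanTwist P i →
      Ω i (G.twist i P) = -Ω i P)
    (hΩb : ∀ i j P, G.IsPerfectMatching P → G.CanTwist P i → G.CanTwist P j →
      1 < ((i : ℤ) - (j : ℤ)).natAbs →
      Ω i P + Ω j (G.twist i P) = Ω j P + Ω i (G.twist j P))
    (P : Set LatticeEdge) (hP : G.IsPerfectMatching P)
    (r : ℕ) (idx : ℕ → ℕ) (R : ℕ → Set LatticeEdge)
    (h0 : R 0 = P) (hrP : R r = P)
    (hstep : ∀ t, t < r → G.CanTwist (R t) (idx t) ∧ R (t + 1) = G.twist (idx t) (R t)) :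
    ∑ t ∈ Finset.range r, Ω (idx t) (R t) = 0 := by
  have hR : ∀ t < r, R (t + 1) = G.twist (idx t) (R t) := fun t ht => (hstep t ht).2
  have hwalk := isWalk_map_range hR fun t ht => (hstep t ht).1
  have hend := walkEnd_map_range hR
  rw [h0] at hwalk hend
  rw [← walkSum_map_range Ω hR, h0]
  exact SnakeGraph.walkSum_eq_zero_of_walkEnd_eq Ω hΩa hΩb hP hwalk (hend.trans hrP)
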